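/- The two-variable function $f_2(x_1,x_2; n_1,n_2,a,\mu) = (1-\tanh^2 x_1)^{a+\frac{n_2}{2}+\frac14}\, C_{n_1}^{(n_2+\mu+\frac12)}(\tanh x_1)\, (1-\tanh^2 x_2)^{a}\, C_{n_2}^{(\mu)}(\tanh x_2)$ has two-dimensional Fourier transform $\mathcal{F}(f_2)(\xi_1,\xi_2) = \frac{2^{n_2+4a-\frac32}(2\mu)_{n_2}(2(n_2+\mu+\frac12))_{n_1}}{n_1!\, n_2!}\, \Theta_1(\xi_1)\, \Theta_2(\xi_2)$, where $\Theta_1(\xi_1) = B(a+\frac{n_2+i\xi_1}{2}+\frac14,\ a+\frac{n_2-i\xi_1}{2}+\frac14)\, {}_3F_2(-n_1,\ n_1+2(n_2+\mu+\frac12),\ a+\frac{n_2+i\xi_1}{2}+\frac14;\ n_2+2a+\frac12,\ n_2+\mu+1;\ 1)$ and $\Theta_2(\xi_2) = B(a+\frac{i\xi_2}{2},\ a-\frac{i\xi_2}{2})\, {}_3F_2(-n_2,\ n_2+2\mu,\ a+\frac{i\xi_2}{2};\ 2a,\ \mu+\frac12;\ 1)$. -/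

import Mathlib

/-!
The integrand factorises, so the transform is the product of two one-dimensional transforms of
`(sech x)^(2p) C_n^(λ)(tanh x)`. Expanding the Gegenbauer polynomial in powers of
`u = (1 - tanh x) / 2` reduces these to `∫ e^{-iξx} (sech x)^(2p) u^l dx`. The substitution
`x = artanh (1 - 2u)`, under which `sech² x = 4 u (1 - u)`, `e^{-2x} = u / (1 - u)` and
`dx = -du / (2 u (1 - u))`, turns this integral into
`2^(2p-1) B(p + l + iξ/2, p - iξ/2) = 2^(2p-1) B(p + iξ/2, p - iξ/2) (p + iξ/2)_l / (2p)_l`,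
and summing over `l` produces the `₃F₂`.
-/

open MeasureTheory Finset

noncomputable section

/-- Pochhammer symbol `(a)_n` for real `a`. -/
def pochR (a : ℝ) (n : ℕ) : ℝ := ∏ k ∈ Finset.range n, (a + k)

/-- Pochhammer symbol `(a)_n` for complex `a`. -/
def pochC (a : ℂ) (n : ℕ) : ℂ := ∏ k ∈ Finset.range n, (a + k)

/-- Gegenbauer polynomial `C_n^{(λ)}(x)` via the terminating `₂F₁` representation. -/
def Geg (n : ℕ) (lam : ℝ) (x : ℝ) : ℝ :=
  pochR (2 * lam) n / (Nat.factorial n) *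
    ∑ l ∈ Finset.range (n + 1),
      pochR (-(n : ℝ)) l * pochR ((n : ℝ) + 2 * lam) l /
        (pochR (lam + 1 / 2) l * (Nat.factorial l)) * ((1 - x) / 2) ^ l

/-- Terminating generalized hypergeometric sum `₃F₂(-n, a₂, a₃; b₁, b₂; 1)`. -/
def F32 (n : ℕ) (a2 a3 b1 b2 : ℂ) : ℂ :=
  ∑ l ∈ Finset.range (n + 1),
    pochC (-(n : ℂ)) l * pochC a2 l * pochC a3 l /
      (pochC b1 l * pochC b2 l * (Nat.factorial l))

/-- Beta function for complex arguments. -/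
def BetaC (a b : ℂ) : ℂ := Complex.Gamma a * Complex.Gamma b / Complex.Gamma (a + b)

/-- Continuous Hahn polynomial `p_n(x; a, b, c, d)`. -/
def hahn (n : ℕ) (x a b c d : ℂ) : ℂ :=
  Complex.I ^ n * pochC (a + c) n * pochC (a + d) n / (Nat.factorial n) *
    F32 n ((n : ℂ) + a + b + c + d - 1) (a + Complex.I * x) (a + c) (a + d)


open Set Real

@[simp, norm_cast]
lemma ofReal_pochR (r : ℝ) (n : ℕ) : ((pochR r n : ℝ) : ℂ) = pochC r n := by
  simp [pochR, pochC]

lemma pochC_eq_eval_ascPochhammer (z : ℂ) (n : ℕ) :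
    pochC z n = (ascPochhammer ℂ n).eval z := by
  induction n with
  | zero => simp [pochC]
  | succ n ih => rw [pochC, prod_range_succ, ← pochC, ih, ascPochhammer_succ_eval]

lemma ne_neg_natCast_of_re_pos {z : ℂ} (hz : 0 < z.re) (k : ℕ) : z ≠ -k := by
  rintro rfl
  exact (k.cast_nonneg (α := ℝ)).not_gt (by simpa using hz)

lemma Gamma_add_nat_eq_pochC_mul {z : ℂ} (hz : ∀ k : ℕ, z ≠ -k) (n : ℕ) :
    Complex.Gamma (z + n) = pochC z n * Complex.Gamma z := by
  rw [pochC_eq_eval_ascPochhammer, ← Complex.Gamma_add_nat_div_Gamma_eq z hz,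
    div_mul_cancel₀ _ (Complex.Gamma_ne_zero hz)]

lemma BetaC_add_nat {α β : ℂ} (hα : ∀ k : ℕ, α ≠ -k) (hαβ : ∀ k : ℕ, α + β ≠ -k)
    (n : ℕ) :
    BetaC (α + n) β = BetaC α β * pochC α n / pochC (α + β) n := by
  rw [BetaC, BetaC, add_right_comm, Gamma_add_nat_eq_pochC_mul hα,
    Gamma_add_nat_eq_pochC_mul hαβ]
  ring

lemma betaIntegral_eq_BetaC {s t : ℂ} (hs : 0 < s.re) (ht : 0 < t.re) :
    Complex.betaIntegral s t = BetaC s t := by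
  have hst : 0 < (s + t).re := by simpa using add_pos hs ht
  rw [BetaC, Complex.Gamma_mul_Gamma_eq_betaIntegral hs ht,
    mul_div_cancel_left₀ _ (Complex.Gamma_ne_zero_of_re_pos hst)]

lemma Real.hasDerivAt_artanh {y : ℝ} (hy : y ∈ Set.Ioo (-1) 1) :
    HasDerivAt artanh (1 - y ^ 2)⁻¹ y := by
  obtain ⟨hy₁, hy₂⟩ := hy
  have hlog : HasDerivAt (fun y => (log (1 + y) - log (1 - y)) / 2) (1 - y ^ 2)⁻¹ y := by
    have hplus := ((hasDerivAt_id y).const_add 1).log (by simp only [id_eq, ne_eq]; linarith)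
    have hminus := ((hasDerivAt_id y).const_sub 1).log (by simp only [id_eq, ne_eq]; linarith)
    refine ((hplus.sub hminus).div_const 2).congr_deriv ?_
    have : 1 - y ^ 2 ≠ 0 := by nlinarith
    have : 1 + y ≠ 0 := by linarith
    have : 1 - y ≠ 0 := by linarith
    simp only [id]
    field_simp
    ring
  refine hlog.congr_of_eventuallyEq ?_
  filter_upwards [Ioo_mem_nhds hy₁ hy₂] with z hz
  rw [artanh_eq_half_log (Ioo_subset_Icc_self hz),
    log_div (by linarith [hz.1]) (by linarith [hz.2])]
  ring

lemma hasDerivAt_artanh_one_sub_two_mul {v : ℝ} (hv : v ∈ Set.Ioo 0 1) :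
    HasDerivAt (fun v => artanh (1 - 2 * v)) (-(2 * v * (1 - v))⁻¹) v := by
  obtain ⟨hv₀, hv₁⟩ := hv
  have hy : 1 - 2 * v ∈ Set.Ioo (-1) 1 := ⟨by linarith, by linarith⟩
  refine ((hasDerivAt_artanh hy).comp v
    (((hasDerivAt_id v).const_mul 2).const_sub 1)).congr_deriv ?_
  have : 1 - (1 - 2 * v) ^ 2 ≠ 0 := by nlinarith
  have : 1 - v ≠ 0 := by linarith
  have : v ≠ 0 := by linarith
  field_simp
  ring

lemma injOn_artanh_one_sub_two_mul : InjOn (fun v => artanh (1 - 2 * v)) (Set.Ioo 0 1) :=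
  artanh_injOn.comp (fun v _ w _ h => by simpa using h)
    (fun v hv => ⟨by linarith [hv.2], by linarith [hv.1]⟩)

lemma image_artanh_one_sub_two_mul : (fun v => artanh (1 - 2 * v)) '' Set.Ioo 0 1 = univ := by
  refine eq_univ_of_forall fun x => ⟨(1 - tanh x) / 2, ?_, ?_⟩
  · exact ⟨by linarith [tanh_lt_one x], by linarith [neg_one_lt_tanh x]⟩
  · show artanh (1 - 2 * ((1 - tanh x) / 2)) = x
    rw [show 1 - 2 * ((1 - tanh x) / 2) = tanh x by ring, artanh_tanh]

def tanhBetaKernel (s t : ℂ) (x : ℝ) : ℂ :=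
  (((1 - tanh x) / 2 : ℝ) : ℂ) ^ s * (((1 + tanh x) / 2 : ℝ) : ℂ) ^ t

lemma abs_deriv_smul_tanhBetaKernel (s t : ℂ) {v : ℝ} (hv : v ∈ Set.Ioo 0 1) :
    |-(2 * v * (1 - v))⁻¹| • tanhBetaKernel s t (artanh (1 - 2 * v)) =
      (v : ℂ) ^ (s - 1) * (1 - (v : ℂ)) ^ (t - 1) / 2 := by
  obtain ⟨hv₀, hv₁⟩ := hv
  have hv₀' : (v : ℂ) ≠ 0 := by exact_mod_cast hv₀.ne'
  have hv₁' : 1 - (v : ℂ) ≠ 0 := by exact_mod_cast (sub_pos.2 hv₁).ne'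
  have htanh : tanh (artanh (1 - 2 * v)) = 1 - 2 * v :=
    tanh_artanh ⟨by linarith, by linarith⟩
  have hv₁'' : 0 < 1 - v := by linarith
  rw [tanhBetaKernel, htanh, abs_neg, abs_of_pos (by positivity), Complex.real_smul,
    Complex.cpow_sub _ _ hv₀', Complex.cpow_sub _ _ hv₁', Complex.cpow_one, Complex.cpow_one]
  push_cast
  field_simp
  ring_nf

section BetaIntegral

variable {s t : ℂ}

lemma integrableOn_beta_integrand (hs : 0 < s.re) (ht : 0 < t.re) :
    IntegrableOn (fun v : ℝ => (v : ℂ) ^ (s - 1) * (1 - (v : ℂ)) ^ (t - 1)) (Set.Ioo 0 1) :=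
  ((intervalIntegrable_iff_integrableOn_Ioc_of_le zero_le_one).mp
    (Complex.betaIntegral_convergent hs ht)).mono_set Ioo_subset_Ioc_self

lemma integrable_tanhBetaKernel (hs : 0 < s.re) (ht : 0 < t.re) :
    Integrable (tanhBetaKernel s t) := by
  rw [← integrableOn_univ, ← image_artanh_one_sub_two_mul,
    integrableOn_image_iff_integrableOn_abs_deriv_smul measurableSet_Ioo
      (fun v hv => (hasDerivAt_artanh_one_sub_two_mul hv).hasDerivWithinAt)
      injOn_artanh_one_sub_two_mul]
  exact IntegrableOn.congr_fun ((integrableOn_beta_integrand hs ht).div_const 2)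
    (fun v hv => (abs_deriv_smul_tanhBetaKernel s t hv).symm) measurableSet_Ioo

lemma integral_tanhBetaKernel :
    ∫ x, tanhBetaKernel s t x = Complex.betaIntegral s t / 2 := by
  rw [← setIntegral_univ, ← image_artanh_one_sub_two_mul,
    integral_image_eq_integral_abs_deriv_smul measurableSet_Ioo
      (fun v hv => (hasDerivAt_artanh_one_sub_two_mul hv).hasDerivWithinAt)
      injOn_artanh_one_sub_two_mul,
    setIntegral_congr_fun measurableSet_Ioo (fun v hv => abs_deriv_smul_tanhBetaKernel s t hv),
    integral_div, Complex.betaIntegral, intervalIntegral.integral_of_le zero_le_one,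
    integral_Ioc_eq_integral_Ioo]

end BetaIntegral

lemma tanhBetaKernel_mul_tanhBetaKernel (s t s' t' : ℂ) (x : ℝ) :
    tanhBetaKernel s t x * tanhBetaKernel s' t' x = tanhBetaKernel (s + s') (t + t') x := by
  have hu : (((1 - tanh x) / 2 : ℝ) : ℂ) ≠ 0 := by
    exact_mod_cast (div_pos (sub_pos.2 (tanh_lt_one x)) two_pos).ne'
  have hw : (((1 + tanh x) / 2 : ℝ) : ℂ) ≠ 0 := by
    exact_mod_cast (div_pos (by linarith [neg_one_lt_tanh x]) two_pos).ne'
  rw [tanhBetaKernel, tanhBetaKernel, tanhBetaKernel, Complex.cpow_add _ _ hu,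
    Complex.cpow_add _ _ hw]
  ring

lemma cexp_neg_mul_eq_tanhBetaKernel (z : ℂ) (x : ℝ) :
    Complex.exp (-(z * x)) = tanhBetaKernel (z / 2) (-(z / 2)) x := by
  have hcosh : 0 < 2 * cosh x := by positivity
  have hcosh₀ : cosh x ≠ 0 := (cosh_pos x).ne'
  have hu : (1 - tanh x) / 2 = exp (-x) / (2 * cosh x) := by
    rw [tanh_eq_sinh_div_cosh, ← cosh_sub_sinh]
    field_simp
  have hw : (1 + tanh x) / 2 = exp x / (2 * cosh x) := by
    rw [tanh_eq_sinh_div_cosh, ← cosh_add_sinh]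
    field_simp
  rw [tanhBetaKernel, hu, hw,
    Complex.cpow_def_of_ne_zero (Complex.ofReal_ne_zero.2 (by positivity)),
    Complex.cpow_def_of_ne_zero (Complex.ofReal_ne_zero.2 (by positivity)), ← Complex.exp_add,
    ← Complex.ofReal_log (by positivity), ← Complex.ofReal_log (by positivity),
    log_div (by positivity) hcosh.ne',
    log_div (by positivity) hcosh.ne', log_exp, log_exp]
  push_cast
  ring_nf

lemma ofReal_one_sub_tanh_sq_rpow_mul_pow (p : ℝ) (l : ℕ) (x : ℝ) :
    (((1 - tanh x ^ 2) ^ p * ((1 - tanh x) / 2) ^ l : ℝ) : ℂ) =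
      ((2 ^ (2 * p) : ℝ) : ℂ) * tanhBetaKernel (p + l) p x := by
  have hu : 0 < (1 - tanh x) / 2 := by linarith [tanh_lt_one x]
  have hw : 0 < (1 + tanh x) / 2 := by linarith [neg_one_lt_tanh x]
  have hsech : 1 - tanh x ^ 2 = 2 ^ 2 * ((1 - tanh x) / 2 * ((1 + tanh x) / 2)) := by ring
  rw [hsech, mul_rpow (by norm_num) (by positivity), mul_rpow hu.le hw.le, ← rpow_natCast,
    ← rpow_mul zero_le_two, tanhBetaKernel, Complex.cpow_add _ _ (by exact_mod_cast hu.ne'),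
    Complex.cpow_natCast]
  push_cast [Complex.ofReal_cpow hu.le, Complex.ofReal_cpow hw.le]
  ring

section FourierTransform

variable {p : ℝ} (l : ℕ) (ξ : ℝ)

lemma cexp_mul_sech_sq_rpow_mul_pow_eq_tanhBetaKernel (x : ℝ) :
    Complex.exp (-(Complex.I * ξ * x)) *
        (((1 - tanh x ^ 2) ^ p * ((1 - tanh x) / 2) ^ l : ℝ) : ℂ) =
      ((2 ^ (2 * p) : ℝ) : ℂ) *
        tanhBetaKernel (p + l + Complex.I * ξ / 2) (p - Complex.I * ξ / 2) x := by
  rw [ofReal_one_sub_tanh_sq_rpow_mul_pow, cexp_neg_mul_eq_tanhBetaKernel, mul_left_comm,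
    tanhBetaKernel_mul_tanhBetaKernel]
  ring_nf

variable {l ξ} in
lemma re_add_natCast_add_I_mul_div_two_pos (hp : 0 < p) :
    0 < ((p : ℂ) + l + Complex.I * ξ / 2).re := by
  simpa using add_pos_of_pos_of_nonneg hp l.cast_nonneg

lemma integrable_cexp_mul_sech_sq_rpow_mul_pow (hp : 0 < p) :
    Integrable fun x : ℝ => Complex.exp (-(Complex.I * ξ * x)) *
      (((1 - tanh x ^ 2) ^ p * ((1 - tanh x) / 2) ^ l : ℝ) : ℂ) := by
  simp_rw [cexp_mul_sech_sq_rpow_mul_pow_eq_tanhBetaKernel]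
  exact (integrable_tanhBetaKernel (re_add_natCast_add_I_mul_div_two_pos hp)
    (by simpa using hp)).const_mul _

lemma integral_cexp_mul_sech_sq_rpow_mul_pow (hp : 0 < p) :
    ∫ x : ℝ, Complex.exp (-(Complex.I * ξ * x)) *
        (((1 - tanh x ^ 2) ^ p * ((1 - tanh x) / 2) ^ l : ℝ) : ℂ) =
      ((2 ^ (2 * p - 1) : ℝ) : ℂ) * BetaC (p + Complex.I * ξ / 2) (p - Complex.I * ξ / 2) *
        pochC (p + Complex.I * ξ / 2) l / pochC (2 * p) l := by
  have hα : 0 < (p + Complex.I * ξ / 2 : ℂ).re := by simpa using hp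
  have hβ : 0 < (p - Complex.I * ξ / 2 : ℂ).re := by simpa using hp
  have hαβ : 0 < (p + Complex.I * ξ / 2 + (p - Complex.I * ξ / 2) : ℂ).re := by
    simpa using add_pos hp hp
  simp_rw [cexp_mul_sech_sq_rpow_mul_pow_eq_tanhBetaKernel]
  rw [integral_const_mul, integral_tanhBetaKernel,
    betaIntegral_eq_BetaC (re_add_natCast_add_I_mul_div_two_pos hp) hβ, add_right_comm,
    BetaC_add_nat (ne_neg_natCast_of_re_pos hα) (ne_neg_natCast_of_re_pos hαβ),
    rpow_sub two_pos, rpow_one]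
  push_cast
  ring_nf

end FourierTransform

lemma integral_cexp_mul_sech_sq_rpow_mul_Geg {p : ℝ} (hp : 0 < p) (n : ℕ) (lam ξ : ℝ) :
    ∫ x : ℝ, Complex.exp (-(Complex.I * ξ * x)) *
        (((1 - tanh x ^ 2) ^ p * Geg n lam (tanh x) : ℝ) : ℂ) =
      ((2 ^ (2 * p - 1) * pochR (2 * lam) n / n.factorial : ℝ) : ℂ) *
        BetaC (p + Complex.I * ξ / 2) (p - Complex.I * ξ / 2) *
        F32 n (n + 2 * lam) (p + Complex.I * ξ / 2) (2 * p) (lam + 1 / 2) := by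
  have hexpand : ∀ x : ℝ, Complex.exp (-(Complex.I * ξ * x)) *
      (((1 - tanh x ^ 2) ^ p * Geg n lam (tanh x) : ℝ) : ℂ) =
      ∑ l ∈ range (n + 1), (pochC (2 * lam) n / n.factorial * pochC (-n) l *
        pochC (n + 2 * lam) l / (pochC (lam + 1 / 2) l * l.factorial)) *
        (Complex.exp (-(Complex.I * ξ * x)) *
          (((1 - tanh x ^ 2) ^ p * ((1 - tanh x) / 2) ^ l : ℝ) : ℂ)) := by
    intro x
    rw [Geg, mul_left_comm, mul_sum, mul_sum]
    push_cast
    rw [mul_sum]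
    exact sum_congr rfl fun l _ => by ring
  simp_rw [hexpand]
  rw [integral_finsetSum _ fun l _ =>
    (integrable_cexp_mul_sech_sq_rpow_mul_pow l ξ hp).const_mul _, F32, mul_sum]
  refine sum_congr rfl fun l _ => ?_
  rw [integral_const_mul, integral_cexp_mul_sech_sq_rpow_mul_pow l ξ hp]
  push_cast
  ring

lemma integral_integral_cexp_mul_ofReal_mul (ξ₁ ξ₂ : ℝ) (f g : ℝ → ℝ) :
    ∫ x₁ : ℝ, ∫ x₂ : ℝ, Complex.exp (-(Complex.I * (ξ₁ * x₁ + ξ₂ * x₂))) *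
        ((f x₁ * g x₂ : ℝ) : ℂ) =
      (∫ x : ℝ, Complex.exp (-(Complex.I * ξ₁ * x)) * (f x : ℂ)) *
        ∫ x : ℝ, Complex.exp (-(Complex.I * ξ₂ * x)) * (g x : ℂ) := by
  rw [← integral_mul_const]
  congr 1 with x₁
  rw [← integral_const_mul]
  congr 1 with x₂
  simp only [mul_add, neg_add, Complex.exp_add, Complex.ofReal_mul]
  ring_nf

theorem stmt_13_general (a μ : ℝ) (ha : 0 < a) (n₁ n₂ : ℕ) (ξ₁ ξ₂ : ℝ) :
    ∫ x₁ : ℝ, ∫ x₂ : ℝ,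
        Complex.exp (-(Complex.I * ((ξ₁ : ℂ) * (x₁ : ℂ) + (ξ₂ : ℂ) * (x₂ : ℂ)))) *
          (((1 - Real.tanh x₁ ^ 2) ^ (a + (n₂ : ℝ) / 2 + 1/4) *
              Geg n₁ ((n₂ : ℝ) + μ + 1/2) (Real.tanh x₁) *
              (1 - Real.tanh x₂ ^ 2) ^ a * Geg n₂ μ (Real.tanh x₂) : ℝ) : ℂ)
      = ((((2 : ℝ) ^ ((n₂ : ℝ) + 4 * a - 3/2)) * pochR (2 * μ) n₂ *
            pochR (2 * ((n₂ : ℝ) + μ + 1/2)) n₁ /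
            ((Nat.factorial n₁) * (Nat.factorial n₂)) : ℝ) : ℂ) *
        (BetaC ((a : ℂ) + ((n₂ : ℂ) + Complex.I * (ξ₁ : ℂ)) / 2 + 1/4)
            ((a : ℂ) + ((n₂ : ℂ) - Complex.I * (ξ₁ : ℂ)) / 2 + 1/4) *
          F32 n₁ ((n₁ : ℂ) + 2 * ((n₂ : ℂ) + (μ : ℂ) + 1/2))
            ((a : ℂ) + ((n₂ : ℂ) + Complex.I * (ξ₁ : ℂ)) / 2 + 1/4)
            ((n₂ : ℂ) + 2 * (a : ℂ) + 1/2) ((n₂ : ℂ) + (μ : ℂ) + 1)) *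
        (BetaC ((a : ℂ) + Complex.I * (ξ₂ : ℂ) / 2) ((a : ℂ) - Complex.I * (ξ₂ : ℂ) / 2) *
          F32 n₂ ((n₂ : ℂ) + 2 * (μ : ℂ)) ((a : ℂ) + Complex.I * (ξ₂ : ℂ) / 2)
            (2 * (a : ℂ)) ((μ : ℂ) + 1/2)) := by
  have hsep := integral_integral_cexp_mul_ofReal_mul ξ₁ ξ₂
    (fun x => (1 - tanh x ^ 2) ^ (a + (n₂ : ℝ) / 2 + 1/4) *
      Geg n₁ ((n₂ : ℝ) + μ + 1/2) (tanh x))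
    (fun x => (1 - tanh x ^ 2) ^ a * Geg n₂ μ (tanh x))
  simp only [← mul_assoc] at hsep
  have hpow : (2 : ℝ) ^ (2 * (a + (n₂ : ℝ) / 2 + 1/4) - 1) * 2 ^ (2 * a - 1) =
      2 ^ ((n₂ : ℝ) + 4 * a - 3/2) := by
    rw [← rpow_add two_pos]
    ring_nf
  rw [hsep, integral_cexp_mul_sech_sq_rpow_mul_Geg (by positivity),
    integral_cexp_mul_sech_sq_rpow_mul_Geg ha, ← hpow]
  push_cast
  ring_nf

theorem stmt_13 (a μ : ℝ) (ha : 0 < a) (hμ : -1/2 < μ) (n₁ n₂ : ℕ) (ξ₁ ξ₂ : ℝ) :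
    ∫ x₁ : ℝ, ∫ x₂ : ℝ,
        Complex.exp (-(Complex.I * ((ξ₁ : ℂ) * (x₁ : ℂ) + (ξ₂ : ℂ) * (x₂ : ℂ)))) *
          (((1 - Real.tanh x₁ ^ 2) ^ (a + (n₂ : ℝ) / 2 + 1/4) *
              Geg n₁ ((n₂ : ℝ) + μ + 1/2) (Real.tanh x₁) *
              (1 - Real.tanh x₂ ^ 2) ^ a * Geg n₂ μ (Real.tanh x₂) : ℝ) : ℂ)
      = ((((2 : ℝ) ^ ((n₂ : ℝ) + 4 * a - 3/2)) * pochR (2 * μ) n₂ *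
            pochR (2 * ((n₂ : ℝ) + μ + 1/2)) n₁ /
            ((Nat.factorial n₁) * (Nat.factorial n₂)) : ℝ) : ℂ) *
        (BetaC ((a : ℂ) + ((n₂ : ℂ) + Complex.I * (ξ₁ : ℂ)) / 2 + 1/4)
            ((a : ℂ) + ((n₂ : ℂ) - Complex.I * (ξ₁ : ℂ)) / 2 + 1/4) *
          F32 n₁ ((n₁ : ℂ) + 2 * ((n₂ : ℂ) + (μ : ℂ) + 1/2))
            ((a : ℂ) + ((n₂ : ℂ) + Complex.I * (ξ₁ : ℂ)) / 2 + 1/4)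
            ((n₂ : ℂ) + 2 * (a : ℂ) + 1/2) ((n₂ : ℂ) + (μ : ℂ) + 1)) *
        (BetaC ((a : ℂ) + Complex.I * (ξ₂ : ℂ) / 2) ((a : ℂ) - Complex.I * (ξ₂ : ℂ) / 2) *
          F32 n₂ ((n₂ : ℂ) + 2 * (μ : ℂ)) ((a : ℂ) + Complex.I * (ξ₂ : ℂ) / 2)
            (2 * (a : ℂ)) ((μ : ℂ) + 1/2)) :=
  stmt_13_general a μ ha n₁ n₂ ξ₁ ξ₂
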